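/- Let $D$ be finite, $p_0$ strictly positive on $D$, $u : D \to \mathbb{R}$, and define the worst-case probability $\underline{p}(s) = p_0(s)\big(1 + \sqrt{d}\,(\mathbb{E}_0[u] - u(s))/\mathbb{S}_0[u]\big)$ for nonconstant $u$ and $d > 0$ with $(1+d) < \min_s 1/(1-p_0(s))$. Then the Lagrange multipliers $\underline{\nu} = \mathbb{E}_0[u] + \mathbb{S}_0[u]/\sqrt{d}$ and $\underline{\eta} = \mathbb{S}_0[u]/(2\sqrt{d})$ satisfy $u(s) - \underline{\nu} + 2\underline{\eta}\,\underline{p}(s)/p_0(s) = 0$ for every $s \in D$, i.e., the KKT stationarity condition for minimizing $\sum_s p(s) u(s)$ over the constraint set $\{p \geq 0, \sum p = 1, \sum p^2/p_0 \leq 1+d\}$ holds at $\underline{p}$ with $\underline{\eta} > 0$ and binding divergence constraint $\sum_s \underline{p}(s)^2/p_0(s) = 1+d$. -/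

import Mathlib

/-!
Write `c = √d / 𝕊₀[u]`, so that `pmin = p₀ (1 + c (𝔼₀[u] - u))`. Stationarity is pointwise algebra.
The tilt `𝔼₀[u] - u` has `p₀`-mean zero, hence `∑ pmin² / p₀ = 1 + c² 𝕍₀[u] = 1 + d`.
-/

/-- Expectation of `u` under the probability mass function `p`. -/
noncomputable def expct {D : Type*} [Fintype D] (p u : D → ℝ) : ℝ := ∑ s, p s * u s

/-- Variance of `u` under the probability mass function `p`. -/
noncomputable def var0 {D : Type*} [Fintype D] (p u : D → ℝ) : ℝ :=
  ∑ s, p s * (u s - expct p u) ^ 2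

/-- Standard deviation of `u` under the probability mass function `p`. -/
noncomputable def sdev {D : Type*} [Fintype D] (p u : D → ℝ) : ℝ :=
  Real.sqrt (var0 p u)

section

variable {D : Type*} [Fintype D] {p u : D → ℝ}

lemma var0_pos (hp : ∀ s, 0 < p s) (hu : ∃ s t, u s ≠ u t) : 0 < var0 p u := by
  obtain ⟨s, t, hst⟩ := hu
  have hdev : ∃ r, u r ≠ expct p u := by
    by_contra! h
    exact hst ((h s).trans (h t).symm)
  obtain ⟨r, hr⟩ := hdev
  have hr' : 0 < p r * (u r - expct p u) ^ 2 :=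
    mul_pos (hp r) (sq_pos_of_ne_zero (sub_ne_zero.mpr hr))
  exact Finset.sum_pos' (fun x _ => mul_nonneg (hp x).le (sq_nonneg _)) ⟨r, Finset.mem_univ r, hr'⟩

lemma sum_mul_expct_sub (hsum : ∑ s, p s = 1) : ∑ s, p s * (expct p u - u s) = 0 := by
  simp only [mul_sub, Finset.sum_sub_distrib, ← Finset.sum_mul, hsum, one_mul, expct, sub_self]

lemma sum_sq_tilt_div (hp : ∀ s, p s ≠ 0) (hsum : ∑ s, p s = 1) (c : ℝ) :
    ∑ s, (p s * (1 + c * (expct p u - u s))) ^ 2 / p s = 1 + c ^ 2 * var0 p u := by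
  have hterm : ∀ s, (p s * (1 + c * (expct p u - u s))) ^ 2 / p s
      = p s + 2 * c * (p s * (expct p u - u s)) + c ^ 2 * (p s * (u s - expct p u) ^ 2) := by
    intro s
    field_simp [hp s]
    ring
  simp only [hterm, Finset.sum_add_distrib, ← Finset.mul_sum, hsum, sum_mul_expct_sub hsum, var0]
  ring

end

theorem stmt_18_general {D : Type*} [Fintype D]
    (p0 : D → ℝ) (hpos : ∀ s, 0 < p0 s) (hsum : ∑ s, p0 s = 1)
    (u : D → ℝ) (hu : ∃ s t, u s ≠ u t)
    (d : ℝ) (hd : 0 < d)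
    (pmin : D → ℝ)
    (hpmin : ∀ s, pmin s =
      p0 s * (1 + Real.sqrt d * (expct p0 u - u s) / sdev p0 u))
    (ν η : ℝ)
    (hν : ν = expct p0 u + sdev p0 u / Real.sqrt d)
    (hη : η = sdev p0 u / (2 * Real.sqrt d)) :
    (∀ s, u s - ν + 2 * η * pmin s / p0 s = 0) ∧
      0 < η ∧
      ∑ s, (pmin s) ^ 2 / p0 s = 1 + d := by
  have hvar := var0_pos hpos hu
  have hS : 0 < sdev p0 u := Real.sqrt_pos.mpr hvar
  have hq : 0 < Real.sqrt d := Real.sqrt_pos.mpr hd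
  refine ⟨fun s => ?_, by rw [hη]; positivity, ?_⟩
  · rw [hpmin, hν, hη]
    field_simp [(hpos s).ne']
    ring
  · calc ∑ s, pmin s ^ 2 / p0 s
        = ∑ s, (p0 s * (1 + Real.sqrt d / sdev p0 u * (expct p0 u - u s))) ^ 2 / p0 s := by
          simp only [hpmin, mul_div_right_comm]
      _ = 1 + (Real.sqrt d / sdev p0 u) ^ 2 * var0 p0 u :=
          sum_sq_tilt_div (fun s => (hpos s).ne') hsum _
      _ = 1 + d := by
          rw [div_pow, Real.sq_sqrt hd.le, sdev, Real.sq_sqrt hvar.le]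
          field_simp

theorem stmt_18 {D : Type*} [Fintype D]
    (p0 : D → ℝ) (hpos : ∀ s, 0 < p0 s) (hsum : ∑ s, p0 s = 1)
    (u : D → ℝ) (hu : ∃ s t, u s ≠ u t)
    (d : ℝ) (hd : 0 < d) (hc : ∀ s, 1 + d < 1 / (1 - p0 s))
    (pmin : D → ℝ)
    (hpmin : ∀ s, pmin s =
      p0 s * (1 + Real.sqrt d * (expct p0 u - u s) / sdev p0 u))
    (ν η : ℝ)
    (hν : ν = expct p0 u + sdev p0 u / Real.sqrt d)
    (hη : η = sdev p0 u / (2 * Real.sqrt d)) :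
    (∀ s, u s - ν + 2 * η * pmin s / p0 s = 0) ∧
      0 < η ∧
      ∑ s, (pmin s) ^ 2 / p0 s = 1 + d :=
  stmt_18_general p0 hpos hsum u hu d hd pmin hpmin ν η hν hη
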